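/- If the sequence (c_k) satisfies c_k ≥ c > 0 for all k, then the sequence (s_k) defined by s_{k+1}² = s_k²τ²σ⁴/(4c_k²s_k² + τ²σ⁴) with s_1 > 0 converges to 0. -/

import Mathlib

open Filter Topology

/-!
The inverse squares `t k = 1 / s k ^ 2` obey the affine recurrence
`t (k + 1) = t k + 4 c_k² / (τ² σ⁴)`, so they grow at least linearly, at rate `4 c² / (τ² σ⁴)`.
Hence `s k ^ 2 ≤ 1 / t k → 0`.
-/

/-- No hypothesis on `a * x + b` is needed: when it vanishes both sides are `0`. -/
lemma inv_mul_div_add_eq (x a b : ℝ) (hx : x ≠ 0) (hb : b ≠ 0) :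
    (x * b / (a * x + b))⁻¹ = x⁻¹ + a / b := by
  rw [inv_div]
  field_simp
  ring

lemma tendsto_atTop_of_add_le_succ {u : ℕ → ℝ} {A : ℝ} (hA : 0 < A)
    (h : ∀ k, u k + A ≤ u (k + 1)) : Tendsto u atTop atTop := by
  have hlin : ∀ k : ℕ, u 0 + k * A ≤ u k := by
    intro k
    induction k with
    | zero => simp
    | succ k ih => push_cast; linarith [h k]
  exact tendsto_atTop_mono hlin
    (tendsto_atTop_add_const_left _ _ (tendsto_natCast_atTop_atTop.atTop_mul_const hA))

lemma tendsto_zero_of_inv_sq_tendsto_atTop {α : Type*} {l : Filter α} {s : α → ℝ}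
    (hs : ∀ k, 0 ≤ s k) (h : Tendsto (fun k => (s k ^ 2)⁻¹) l atTop) :
    Tendsto s l (𝓝 0) := by
  have hsq : Tendsto (fun k => s k ^ 2) l (𝓝 0) := by simpa [Pi.inv_def] using h.inv_tendsto_atTop
  simpa [Real.sqrt_sq (hs _)] using hsq.sqrt

theorem stmt_4_general (τ σ c₀ : ℝ) (hτ : 0 < τ) (hσ : 0 < σ) (hc₀ : 0 < c₀)
    (c s : ℕ → ℝ) (hc : ∀ k, c₀ ≤ c k)
    (hpos : ∀ k, 0 < s k)
    (hrec : ∀ k, (s (k + 1)) ^ 2 =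
      (s k) ^ 2 * τ ^ 2 * σ ^ 4 / (4 * (c k) ^ 2 * (s k) ^ 2 + τ ^ 2 * σ ^ 4)) :
    Filter.Tendsto s Filter.atTop (nhds 0) := by
  have hb : 0 < τ ^ 2 * σ ^ 4 := by positivity
  have hstep : ∀ k, (s k ^ 2)⁻¹ + 4 * c₀ ^ 2 / (τ ^ 2 * σ ^ 4) ≤ (s (k + 1) ^ 2)⁻¹ := by
    intro k
    rw [hrec k, mul_assoc, inv_mul_div_add_eq _ _ _ (pow_pos (hpos k) 2).ne' hb.ne']
    have := pow_le_pow_left₀ hc₀.le (hc k) 2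
    gcongr
  exact tendsto_zero_of_inv_sq_tendsto_atTop (fun k => (hpos k).le)
    (tendsto_atTop_of_add_le_succ (by positivity) hstep)

theorem stmt_4 (τ σ c₀ : ℝ) (hτ : 0 < τ) (hσ : 0 < σ) (hc₀ : 0 < c₀)
    (c s : ℕ → ℝ) (hc : ∀ k, c₀ ≤ c k)
    (hs1 : 0 < s 1) (hpos : ∀ k, 0 < s k)
    (hrec : ∀ k, (s (k + 1)) ^ 2 =
      (s k) ^ 2 * τ ^ 2 * σ ^ 4 / (4 * (c k) ^ 2 * (s k) ^ 2 + τ ^ 2 * σ ^ 4)) :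
    Filter.Tendsto s Filter.atTop (nhds 0) :=
  stmt_4_general τ σ c₀ hτ hσ hc₀ c s hc hpos hrec
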